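/- Let M be the centered block random matrix M(n₁,n₂,u,v,δ,q), and suppose n₂ is even and v is balanced (exactly n₂/2 coordinates of v equal +1). Then for every x ∈ ℝ^{n₁}, E[ ‖Mᵀ x‖₂² ] = ‖x‖₂² · ( n₂ q − (n₂ q²/2)·(δ² + (2−δ)²) ) + (δ−1)² · q² · n₂ · (u · x)². -/

import Mathlib

open MeasureTheory ProbabilityTheory Matrix

/-!
Each entry `M i j` is a two-point variable with values `1 - q` and `-q`, taking the first
with probability `p = q + (δ - 1) q s`, where `s = u i * v j`. So its mean is `p - q = (δ - 1) q s`
and its variance is `p (1 - p)`, which is affine in `s` because `s² = 1`. The entries of a column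
are independent, so `E[(Mᵀ x)_j²]` is `∑ᵢ xᵢ² Var(M i j)` plus the squared mean
`((δ - 1) q v_j (u ⬝ x))²`. On summing over `j`, the part that is linear in `s` drops out,
because a balanced sign vector has `∑ⱼ v_j = 0`.
-/

/-- The centered block random matrix model `M(n₁,n₂,u,v,δ,q)`: the random matrix `M`
on the probability space `(Ω, μ)` has mutually independent entries, where entry `M i j`
equals `1 - q` with probability `δ*q` (when `u i * v j = 1`), resp. `(2-δ)*q`
(when `u i * v j = -1`), and equals `-q` otherwise. -/
structure IsCenteredBlockMatrix {n₁ n₂ : ℕ} (u : Fin n₁ → ℝ) (v : Fin n₂ → ℝ)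
    (δ q : ℝ) {Ω : Type*} [MeasurableSpace Ω] (μ : Measure Ω)
    (M : Ω → Matrix (Fin n₁) (Fin n₂) ℝ) : Prop where
  meas : ∀ i j, Measurable fun ω => M ω i j
  indep : iIndepFun
    (fun (p : Fin n₁ × Fin n₂) ω => M ω p.1 p.2) μ
  prob_hi : ∀ i j, μ {ω | M ω i j = 1 - q} =
    ENNReal.ofReal (if u i * v j = 1 then δ * q else (2 - δ) * q)
  prob_lo : ∀ i j, μ {ω | M ω i j = -q} =
    1 - ENNReal.ofReal (if u i * v j = 1 then δ * q else (2 - δ) * q)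

structure IsTwoPoint {Ω : Type*} [MeasurableSpace Ω] (μ : Measure Ω) (X : Ω → ℝ)
    (a b p : ℝ) : Prop where
  measurable : Measurable X
  ne : a ≠ b
  nonneg : 0 ≤ p
  measure_eq_left : μ {ω | X ω = a} = ENNReal.ofReal p
  measure_eq_right : μ {ω | X ω = b} = 1 - ENNReal.ofReal p

namespace IsTwoPoint

variable {Ω : Type*} [MeasurableSpace Ω] {μ : Measure Ω} [IsProbabilityMeasure μ]
  {X : Ω → ℝ} {a b p : ℝ}

lemma le_one (hX : IsTwoPoint μ X a b p) : p ≤ 1 :=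
  ENNReal.ofReal_le_one.mp (hX.measure_eq_left ▸ prob_le_one)

lemma ae_eq_or_eq (hX : IsTwoPoint μ X a b p) : ∀ᵐ ω ∂μ, X ω = a ∨ X ω = b := by
  have hA : MeasurableSet {ω | X ω = a} := hX.measurable (measurableSet_singleton a)
  have hB : MeasurableSet {ω | X ω = b} := hX.measurable (measurableSet_singleton b)
  have hdisj : Disjoint {ω | X ω = a} {ω | X ω = b} :=
    Set.disjoint_left.mpr fun ω ha hb => hX.ne (ha.symm.trans hb)
  have hunion : μ ({ω | X ω = a} ∪ {ω | X ω = b}) = 1 := by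
    rw [measure_union hdisj hB, hX.measure_eq_left, hX.measure_eq_right,
      add_tsub_cancel_of_le (hX.measure_eq_left ▸ prob_le_one)]
  exact ae_iff.mpr ((prob_compl_eq_zero_iff (hA.union hB)).mpr hunion)

lemma comp_ae_eq (hX : IsTwoPoint μ X a b p) (f : ℝ → ℝ) :
    (fun ω => f (X ω)) =ᵐ[μ]
      {ω | X ω = a}.indicator (fun _ => f a) + {ω | X ω = b}.indicator (fun _ => f b) := by
  filter_upwards [hX.ae_eq_or_eq] with ω hω
  rcases hω with h | h
  · simp [Set.indicator, h, hX.ne]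
  · simp [Set.indicator, h, hX.ne.symm]

lemma integrable_comp (hX : IsTwoPoint μ X a b p) (f : ℝ → ℝ) :
    Integrable (fun ω => f (X ω)) μ := by
  refine Integrable.congr ?_ (hX.comp_ae_eq f).symm
  exact ((integrable_const _).indicator (hX.measurable (measurableSet_singleton a))).add
    ((integrable_const _).indicator (hX.measurable (measurableSet_singleton b)))

lemma integral_comp (hX : IsTwoPoint μ X a b p) (f : ℝ → ℝ) :
    ∫ ω, f (X ω) ∂μ = p * f a + (1 - p) * f b := by
  have hA : MeasurableSet {ω | X ω = a} := hX.measurable (measurableSet_singleton a)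
  have hB : MeasurableSet {ω | X ω = b} := hX.measurable (measurableSet_singleton b)
  rw [integral_congr_ae (hX.comp_ae_eq f), integral_add' ((integrable_const _).indicator hA)
    ((integrable_const _).indicator hB), integral_indicator_const _ hA,
    integral_indicator_const _ hB, measureReal_def, measureReal_def, hX.measure_eq_left,
    hX.measure_eq_right, ENNReal.toReal_sub_of_le (ENNReal.ofReal_le_one.mpr hX.le_one)
    ENNReal.one_ne_top, ENNReal.toReal_ofReal hX.nonneg, ENNReal.toReal_one, smul_eq_mul,
    smul_eq_mul]

lemma memLp_two (hX : IsTwoPoint μ X a b p) : MemLp X 2 μ :=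
  (memLp_two_iff_integrable_sq hX.measurable.aestronglyMeasurable).mpr
    (hX.integrable_comp (· ^ 2))

lemma integral_eq (hX : IsTwoPoint μ X a b p) : ∫ ω, X ω ∂μ = p * a + (1 - p) * b :=
  hX.integral_comp id

lemma variance_eq (hX : IsTwoPoint μ X a b p) : Var[X; μ] = p * (1 - p) * (a - b) ^ 2 := by
  rw [variance_eq_sub hX.memLp_two]
  simp only [Pi.pow_apply]
  rw [hX.integral_comp (· ^ 2), hX.integral_eq]
  ring

end IsTwoPoint

lemma integral_sq_sum_mul_of_pairwise_indepFun {Ω ι : Type*} [MeasurableSpace Ω]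
    {μ : Measure Ω} [IsProbabilityMeasure μ] [Fintype ι] {X : ι → Ω → ℝ}
    (hX : ∀ i, MemLp (X i) 2 μ) (hindep : Pairwise fun i k => X i ⟂ᵢ[μ] X k) (c : ι → ℝ) :
    ∫ ω, (∑ i, c i * X i ω) ^ 2 ∂μ =
      ∑ i, c i ^ 2 * Var[X i; μ] + (∑ i, c i * ∫ ω, X i ω ∂μ) ^ 2 := by
  set Y : ι → Ω → ℝ := fun i ω => c i * X i ω
  have hY : ∀ i, MemLp (Y i) 2 μ := fun i => (hX i).const_mul (c i)
  have hYindep : Set.Pairwise (Finset.univ : Finset ι) fun i k => Y i ⟂ᵢ[μ] Y k :=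
    fun i _ k _ hik => (hindep hik).comp (measurable_const_mul (c i)) (measurable_const_mul (c k))
  have hvar := IndepFun.variance_sum (fun i _ => hY i) hYindep
  rw [variance_eq_sub (memLp_finsetSum' _ fun i _ => hY i)] at hvar
  simp only [Finset.sum_apply, Pi.pow_apply] at hvar
  rw [integral_finsetSum _ fun i _ => (hY i).integrable one_le_two] at hvar
  simp only [Y, variance_const_mul, integral_const_mul] at hvar
  linarith

lemma sum_eq_zero_of_balanced {ι : Type*} [Fintype ι] {v : ι → ℝ}
    (hv : ∀ j, v j = 1 ∨ v j = -1)
    (hbal : 2 * (Finset.univ.filter fun j => v j = 1).card = Fintype.card ι) :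
    ∑ j, v j = 0 := by
  have hv' : ∀ j, v j = 2 * (if v j = 1 then 1 else 0) - 1 := fun j => by
    rcases hv j with h | h <;> simp [h] <;> norm_num
  rw [Finset.sum_congr rfl fun j _ => hv' j, Finset.sum_sub_distrib, ← Finset.mul_sum,
    Finset.sum_boole]
  simp only [Finset.sum_const, Finset.card_univ, nsmul_eq_mul, mul_one]
  rw [sub_eq_zero]
  exact_mod_cast hbal

lemma ite_eq_add_mul_of_sign {δ q s : ℝ} (hs : s = 1 ∨ s = -1) :
    (if s = 1 then δ * q else (2 - δ) * q) = q + (δ - 1) * q * s := by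
  rcases hs with rfl | rfl <;> norm_num <;> ring

lemma mul_eq_one_or_eq_neg_one {a b : ℝ} (ha : a = 1 ∨ a = -1) (hb : b = 1 ∨ b = -1) :
    a * b = 1 ∨ a * b = -1 := by
  rcases ha with rfl | rfl <;> rcases hb with rfl | rfl <;> norm_num

namespace IsCenteredBlockMatrix

variable {n₁ n₂ : ℕ} {u : Fin n₁ → ℝ} {v : Fin n₂ → ℝ} {δ q : ℝ} {Ω : Type*}
  [MeasurableSpace Ω] {μ : Measure Ω} {M : Ω → Matrix (Fin n₁) (Fin n₂) ℝ}

lemma isTwoPoint_entry (hM : IsCenteredBlockMatrix u v δ q μ M) (hδ : δ ∈ Set.Icc 0 2)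
    (hq : 0 ≤ q) {i : Fin n₁} {j : Fin n₂} (hs : u i * v j = 1 ∨ u i * v j = -1) :
    IsTwoPoint μ (fun ω => M ω i j) (1 - q) (-q) (q + (δ - 1) * q * (u i * v j)) where
  measurable := hM.meas i j
  ne := by simp
  nonneg := by rcases hs with h | h <;> rw [h] <;> nlinarith [hδ.1, hδ.2]
  measure_eq_left := ite_eq_add_mul_of_sign hs ▸ hM.prob_hi i j
  measure_eq_right := ite_eq_add_mul_of_sign hs ▸ hM.prob_lo i j

variable [IsProbabilityMeasure μ] (hM : IsCenteredBlockMatrix u v δ q μ M)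
  (hδ : δ ∈ Set.Icc 0 2) (hq : 0 ≤ q) (hu : ∀ i, u i = 1 ∨ u i = -1)
  (hv : ∀ j, v j = 1 ∨ v j = -1)
include hM hδ hq hu hv

lemma memLp_transpose_mulVec (x : Fin n₁ → ℝ) (j : Fin n₂) :
    MemLp (fun ω => ((M ω)ᵀ *ᵥ x) j) 2 μ := by
  simp only [mulVec_transpose, vecMul, dotProduct]
  exact memLp_finsetSum _ fun i _ =>
    (hM.isTwoPoint_entry hδ hq (mul_eq_one_or_eq_neg_one (hu i) (hv j))).memLp_two.const_mul _

lemma integral_sq_transpose_mulVec (x : Fin n₁ → ℝ) (j : Fin n₂) :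
    ∫ ω, ((M ω)ᵀ *ᵥ x) j ^ 2 ∂μ =
      (q * (1 - q) - ((δ - 1) * q) ^ 2) * ∑ i, x i ^ 2
        + (δ - 1) * q * (1 - 2 * q) * (∑ i, x i ^ 2 * u i) * v j
        + ((δ - 1) * q) ^ 2 * (u ⬝ᵥ x) ^ 2 := by
  have hentry i := hM.isTwoPoint_entry hδ hq (mul_eq_one_or_eq_neg_one (hu i) (hv j))
  have hindep : Pairwise fun i k => (fun ω => M ω i j) ⟂ᵢ[μ] fun ω => M ω k j :=
    fun i k hik => hM.indep.indepFun (i := (i, j)) (j := (k, j)) (by simp [hik])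
  simp only [mulVec_transpose, vecMul, dotProduct]
  rw [integral_sq_sum_mul_of_pairwise_indepFun (fun i => (hentry i).memLp_two) hindep]
  simp only [fun i => (hentry i).variance_eq, fun i => (hentry i).integral_eq]
  have hvar i : x i ^ 2 * ((q + (δ - 1) * q * (u i * v j)) *
      (1 - (q + (δ - 1) * q * (u i * v j))) * (1 - q - -q) ^ 2) =
      (q * (1 - q) - ((δ - 1) * q) ^ 2) * x i ^ 2
        + (δ - 1) * q * (1 - 2 * q) * (x i ^ 2 * u i) * v j := by
    rcases hu i with h | h <;> rcases hv j with h' | h' <;> rw [h, h'] <;> ring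
  have hmean : ∑ i, x i * ((q + (δ - 1) * q * (u i * v j)) * (1 - q)
      + (1 - (q + (δ - 1) * q * (u i * v j))) * -q) = (δ - 1) * q * v j * ∑ i, u i * x i := by
    rw [Finset.mul_sum]
    exact Finset.sum_congr rfl fun i _ => by ring
  rw [Finset.sum_congr rfl fun i _ => hvar i, hmean, Finset.sum_add_distrib, ← Finset.mul_sum,
    ← Finset.sum_mul, ← Finset.mul_sum]
  rcases hv j with h | h <;> rw [h] <;> ring

end IsCenteredBlockMatrix

theorem expectation_norm_sq_MTx_general {n₁ n₂ : ℕ}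
    (u : Fin n₁ → ℝ) (v : Fin n₂ → ℝ) (δ q : ℝ)
    (hδ : δ ∈ Set.Icc (0:ℝ) 2) (hq : q ∈ Set.Ioo (0:ℝ) 1)
    (hu : ∀ i, u i = 1 ∨ u i = -1) (hv : ∀ j, v j = 1 ∨ v j = -1)
    (hbal : 2 * (Finset.univ.filter fun j => v j = 1).card = n₂)
    {Ω : Type*} [MeasurableSpace Ω] (μ : Measure Ω) [IsProbabilityMeasure μ]
    (M : Ω → Matrix (Fin n₁) (Fin n₂) ℝ)
    (hM : IsCenteredBlockMatrix u v δ q μ M) :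
    ∀ x : Fin n₁ → ℝ,
      ∫ ω, ∑ j, ((M ω)ᵀ.mulVec x j) ^ 2 ∂μ =
        (∑ i, (x i) ^ 2) * (↑n₂ * q - (↑n₂ * q ^ 2 / 2) * (δ ^ 2 + (2 - δ) ^ 2))
          + (δ - 1) ^ 2 * q ^ 2 * ↑n₂ * (u ⬝ᵥ x) ^ 2 := by
  intro x
  have hv_sum : ∑ j, v j = 0 := sum_eq_zero_of_balanced hv (by simpa using hbal)
  rw [integral_finsetSum _ fun j _ =>
    (hM.memLp_transpose_mulVec hδ hq.1.le hu hv x j).integrable_sq]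
  simp only [hM.integral_sq_transpose_mulVec hδ hq.1.le hu hv x]
  simp only [Finset.sum_add_distrib, ← Finset.mul_sum, hv_sum, Finset.sum_const,
    Finset.card_univ, Fintype.card_fin, nsmul_eq_mul]
  ring

/-- `E[‖Mᵀ x‖₂²] = ‖x‖₂² · (n₂q - (n₂q²/2)(δ² + (2-δ)²)) + (δ-1)²·q²·n₂·(u ⬝ x)²`
for the centered block random matrix, when `n₂` is even and `v` is balanced. -/
theorem expectation_norm_sq_MTx {n₁ n₂ : ℕ}
    (u : Fin n₁ → ℝ) (v : Fin n₂ → ℝ) (δ q : ℝ)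
    (hδ : δ ∈ Set.Icc (0:ℝ) 2) (hq : q ∈ Set.Ioo (0:ℝ) 1)
    (hδq : δ * q ≤ 1) (hδq' : (2 - δ) * q ≤ 1)
    (hu : ∀ i, u i = 1 ∨ u i = -1) (hv : ∀ j, v j = 1 ∨ v j = -1)
    (hn₂ : Even n₂)
    (hbal : 2 * (Finset.univ.filter fun j => v j = 1).card = n₂)
    {Ω : Type*} [MeasurableSpace Ω] (μ : Measure Ω) [IsProbabilityMeasure μ]
    (M : Ω → Matrix (Fin n₁) (Fin n₂) ℝ)
    (hM : IsCenteredBlockMatrix u v δ q μ M) :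
    ∀ x : Fin n₁ → ℝ,
      ∫ ω, ∑ j, ((M ω)ᵀ.mulVec x j) ^ 2 ∂μ =
        (∑ i, (x i) ^ 2) * (↑n₂ * q - (↑n₂ * q ^ 2 / 2) * (δ ^ 2 + (2 - δ) ^ 2))
          + (δ - 1) ^ 2 * q ^ 2 * ↑n₂ * (u ⬝ᵥ x) ^ 2 :=
  expectation_norm_sq_MTx_general u v δ q hδ hq hu hv hbal μ M hM
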